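/- arXiv:2306.13560 — 3 statements merged into one kernel-verified Lean document; each statement's English description precedes it below -/
import Mathlib

section
/- Let d ≥ 1 and n ≥ d+2. Define a partial order on the (d+1)-element subsets of {1,…,n} by: A ≤ B if and only if for every 1 ≤ i ≤ d+1 the i-th smallest element of A is at most the i-th smallest element of B. Let T = ({1,…,d+1} \ {2}) ∪ {n} (the set with increasing enumeration 1, 3, 4, …, d+1, n). Then the collection of (d+1)-element subsets A of {1,…,n} with A ≤ T is exactly the set Λ_d of d-simplices of the LGRC, and in particular it has cardinality d(n−d−1)+1 = d·n − (d²+d−1). -/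
/-!
Write `a₀ < ⋯ < a_d` for the elements of `A` and `1, 3, 4, …, d+1, n` for those of `T`.
Then `A ≤ T` says `a₀ ≤ 1`, `aᵢ ≤ i + 2` for `0 < i < d` and `a_d ≤ n`. As `aᵢ ≥ i + 1`, this
forces `a₀ = 1` and `aᵢ ≤ d + 1` for `i < d`, so `A = {1} ∪ S ∪ {m}` with `S ⊆ {2, …, d+1}`,
`|S| = d - 1` and `max S < m ≤ n`; conversely every such set satisfies the bounds, since the
`i`-th element of `S ⊆ {2, …, d+1}` is at most `i + 3`. These sets are exactly the simplices of
`Λ_d`, and counting them by `m` gives `1 + (n - d - 1) · C(d, d - 1)`.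
-/

/-- The set `Λ_d` of `d`-simplices of the lexicographically greedy rigid complex (LGRC)
on vertex set `{1, …, n}`: the simplex `{1, …, d+1}` together with all sets
`{1} ∪ S ∪ {j}` where `S` is a `(d-1)`-element subset of `{2, …, d+1}` and `d+2 ≤ j ≤ n`. -/
def LGRC (d n : ℕ) : Finset (Finset ℕ) :=
  insert (Finset.Icc 1 (d + 1))
    (((Finset.Icc (d + 2) n) ×ˢ ((Finset.Icc 2 (d + 1)).powersetCard (d - 1))).image
      fun x => insert 1 (insert x.1 x.2))

/-- The componentwise partial order on `(d+1)`-element subsets of `ℕ`: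
`A ≤ B` iff for every `j`, the `(j+1)`-st smallest element of `A` is at most the
`(j+1)`-st smallest element of `B`. -/
def simplexLE (d : ℕ) (A B : Finset ℕ) : Prop :=
  ∀ j < d + 1, (A.sort (· ≤ ·)).getD j 0 ≤ (B.sort (· ≤ ·)).getD j 0

instance (d : ℕ) (A B : Finset ℕ) : Decidable (simplexLE d A B) := by
  unfold simplexLE; infer_instance

open Finset

def nthSmallest (s : Finset ℕ) (j : ℕ) : ℕ := (s.sort (· ≤ ·)).getD j 0

theorem simplexLE_iff {d : ℕ} {A B : Finset ℕ} :
    simplexLE d A B ↔ ∀ j < d + 1, nthSmallest A j ≤ nthSmallest B j := Iff.rfl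

section nthSmallest

variable {s : Finset ℕ} {i j : ℕ}

theorem nthSmallest_eq_getElem (hj : j < #s) :
    nthSmallest s j = (s.sort (· ≤ ·))[j]'(by rwa [length_sort]) :=
  List.getD_eq_getElem _ _ _

theorem nthSmallest_mem (hj : j < #s) : nthSmallest s j ∈ s := by
  rw [nthSmallest_eq_getElem hj, ← mem_sort (· ≤ ·)]
  exact List.getElem_mem _

theorem exists_nthSmallest_eq {x : ℕ} (hx : x ∈ s) : ∃ j < #s, nthSmallest s j = x := by
  obtain ⟨j, hj, rfl⟩ := List.mem_iff_getElem.1 ((mem_sort (· ≤ ·)).2 hx)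
  rw [length_sort] at hj
  exact ⟨j, hj, nthSmallest_eq_getElem hj⟩

theorem nthSmallest_lt_nthSmallest (hij : i < j) (hj : j < #s) :
    nthSmallest s i < nthSmallest s j := by
  rw [nthSmallest_eq_getElem hj, nthSmallest_eq_getElem (hij.trans hj)]
  exact (sortedLT_sort s).getElem_lt_getElem_iff.2 hij

theorem nthSmallest_add_sub_le (hij : i ≤ j) (hj : j < #s) :
    nthSmallest s i + (j - i) ≤ nthSmallest s j := by
  induction j, hij using Nat.le_induction with
  | base => simp
  | succ j hij ih =>
    have := nthSmallest_lt_nthSmallest (s := s) (j := j + 1) (Nat.lt_succ_self j) hj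
    have := ih (by omega)
    omega

theorem nthSmallest_bounds_of_subset_Icc {a b : ℕ} (hs : s ⊆ Icc a b) (hj : j < #s) :
    a + j ≤ nthSmallest s j ∧ nthSmallest s j + (#s - 1 - j) ≤ b := by
  have hfirst := mem_Icc.1 (hs (nthSmallest_mem (s := s) (j := 0) (by omega)))
  have hlast := mem_Icc.1 (hs (nthSmallest_mem (s := s) (j := #s - 1) (by omega)))
  have := nthSmallest_add_sub_le (Nat.zero_le j) hj
  have := nthSmallest_add_sub_le (Nat.le_sub_one_of_lt hj) (by omega : #s - 1 < #s)
  omega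

end nthSmallest

theorem sort_insert_insert {α : Type*} [LinearOrder α] {a b : α} {S : Finset α} (hab : a < b)
    (hS : ∀ x ∈ S, a < x ∧ x < b) :
    (insert a (insert b S)).sort (· ≤ ·) = a :: (S.sort (· ≤ ·) ++ [b]) := by
  have hlt : (a :: (S.sort (· ≤ ·) ++ [b])).Pairwise (· < ·) := by
    simp only [List.pairwise_cons, List.pairwise_append, List.mem_append, mem_sort,
      List.mem_singleton, (sortedLT_sort S).pairwise]
    grind
  have hset : insert a (insert b S) = (a :: (S.sort (· ≤ ·) ++ [b])).toFinset := by
    ext x; simp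
  rw [hset, List.toFinset_sort _ (hlt.imp ne_of_lt)]
  exact hlt.imp le_of_lt

section InsertInsert

variable {a b : ℕ} {S : Finset ℕ}

theorem nthSmallest_insert_insert_zero (hab : a < b) (hS : ∀ x ∈ S, a < x ∧ x < b) :
    nthSmallest (insert a (insert b S)) 0 = a := by
  simp [nthSmallest, sort_insert_insert hab hS]

theorem nthSmallest_insert_insert_succ (hab : a < b) (hS : ∀ x ∈ S, a < x ∧ x < b) {i : ℕ}
    (hi : i < #S) : nthSmallest (insert a (insert b S)) (i + 1) = nthSmallest S i := by
  rw [nthSmallest, sort_insert_insert hab hS, List.getD_cons_succ,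
    List.getD_append _ _ _ _ (by rwa [length_sort]), nthSmallest]

theorem nthSmallest_insert_insert_card_succ (hab : a < b) (hS : ∀ x ∈ S, a < x ∧ x < b) :
    nthSmallest (insert a (insert b S)) (#S + 1) = b := by
  rw [nthSmallest, sort_insert_insert hab hS, List.getD_cons_succ,
    List.getD_append_right _ _ _ _ (by rw [length_sort])]
  simp

end InsertInsert

theorem forall_lt_add_one_iff_first_middle_last {d : ℕ} (hd : 1 ≤ d) {P : ℕ → Prop} :
    (∀ j < d + 1, P j) ↔ P 0 ∧ (∀ i < d - 1, P (i + 1)) ∧ P d := by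
  refine ⟨fun h => ⟨h 0 (by omega), fun i hi => h (i + 1) (by omega), h d (by omega)⟩, ?_⟩
  rintro ⟨h0, hmid, hlast⟩ (_ | i) hi
  · exact h0
  · obtain rfl | hi : i + 1 = d ∨ i < d - 1 := by omega
    exacts [hlast, hmid i hi]

theorem T_eq_insert_insert (d n : ℕ) :
    (Icc 1 (d + 1) \ {2}) ∪ {n} = insert 1 (insert n (Icc 3 (d + 1))) := by
  ext x
  simp only [mem_union, mem_sdiff, mem_singleton, mem_insert, mem_Icc]
  omega

theorem simplexLE_T_iff {d n : ℕ} (hd : 1 ≤ d) (hn : d + 2 ≤ n) {A : Finset ℕ} :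
    simplexLE d A ((Icc 1 (d + 1) \ {2}) ∪ {n}) ↔
      nthSmallest A 0 ≤ 1 ∧ (∀ i < d - 1, nthSmallest A (i + 1) ≤ i + 3) ∧
        nthSmallest A d ≤ n := by
  have hS : ∀ x ∈ Icc 3 (d + 1), 1 < x ∧ x < n := fun x hx => by
    rw [mem_Icc] at hx; omega
  have hcard : #(Icc 3 (d + 1)) = d - 1 := by rw [Nat.card_Icc]; omega
  have hmid : ∀ i < d - 1, nthSmallest (Icc 3 (d + 1)) i = i + 3 := fun i hi => by
    have := nthSmallest_bounds_of_subset_Icc (subset_refl _) (hcard ▸ hi)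
    omega
  have hlast : nthSmallest (insert 1 (insert n (Icc 3 (d + 1)))) d = n := by
    convert nthSmallest_insert_insert_card_succ (by omega) hS using 2
    omega
  rw [simplexLE_iff, forall_lt_add_one_iff_first_middle_last hd, T_eq_insert_insert,
    nthSmallest_insert_insert_zero (by omega) hS, hlast]
  refine and_congr_right' (and_congr_left' (forall₂_congr fun i hi => ?_))
  rw [nthSmallest_insert_insert_succ (by omega) hS (hcard ▸ hi), hmid i hi]

/-- The simplex `{1, …, d+1}` of `Λ_d` is the case `m = d + 1`, `S = {2, …, d}`. -/
def IsLGRCSimplex (d n : ℕ) (A : Finset ℕ) : Prop :=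
  ∃ m S, d + 1 ≤ m ∧ m ≤ n ∧ S ⊆ Icc 2 (d + 1) ∧ (∀ x ∈ S, x < m) ∧ #S = d - 1 ∧
    A = insert 1 (insert m S)

theorem mem_LGRC_iff {d n : ℕ} (hn : d + 1 ≤ n) {A : Finset ℕ} :
    A ∈ LGRC d n ↔ IsLGRCSimplex d n A := by
  simp only [LGRC, mem_insert, mem_image, mem_product, mem_Icc, mem_powersetCard, Prod.exists]
  constructor
  · rintro (rfl | ⟨m, S, ⟨⟨hm, hmn⟩, hS, hcard⟩, rfl⟩)
    · refine ⟨d + 1, Icc 2 d, le_rfl, hn, Icc_subset_Icc_right (by omega), fun x hx => ?_,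
        by rw [Nat.card_Icc]; omega, ?_⟩
      · rw [mem_Icc] at hx; omega
      · ext x; simp only [mem_insert, mem_Icc]; omega
    · refine ⟨m, S, by omega, hmn, hS, fun x hx => ?_, hcard, rfl⟩
      have := mem_Icc.1 (hS hx); omega
  · rintro ⟨m, S, hm, hmn, hS, hSm, hcard, rfl⟩
    obtain rfl | hm := hm.eq_or_lt
    · left
      have hS_eq : S = Icc 2 d := eq_of_subset_of_card_le
        (fun x hx => by have := mem_Icc.1 (hS hx); have := hSm x hx; rw [mem_Icc]; omega)
        (by rw [Nat.card_Icc, hcard]; omega)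
      subst hS_eq
      ext x; simp only [mem_insert, mem_Icc]; omega
    · exact Or.inr ⟨m, S, ⟨⟨hm, hmn⟩, hS, hcard⟩, rfl⟩

theorem IsLGRCSimplex.of_simplexLE_T {d n : ℕ} (hd : 1 ≤ d) (hn : d + 2 ≤ n) {A : Finset ℕ}
    (hAn : A ⊆ Icc 1 n) (hA : #A = d + 1) (hle : simplexLE d A ((Icc 1 (d + 1) \ {2}) ∪ {n})) :
    IsLGRCSimplex d n A := by
  obtain ⟨h0, hmid, hlast⟩ := (simplexLE_T_iff hd hn).1 hle
  have hlow : ∀ j < d + 1, 1 + j ≤ nthSmallest A j := fun j hj =>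
    (nthSmallest_bounds_of_subset_Icc hAn (hA ▸ hj)).1
  have h1 : 1 ∈ A := by
    have := hlow 0 (by omega)
    exact (show nthSmallest A 0 = 1 by omega) ▸ nthSmallest_mem (by omega)
  set m := nthSmallest A d
  have hm : d + 1 ≤ m := by have := hlow d (by omega); omega
  have hmA : m ∈ A.erase 1 := mem_erase.2 ⟨by omega, nthSmallest_mem (by omega)⟩
  have hS : ∀ x ∈ (A.erase 1).erase m, ∃ i < d - 1, nthSmallest A (i + 1) = x := by
    intro x hx
    obtain ⟨hxm, hx1, hxA⟩ : x ≠ m ∧ x ≠ 1 ∧ x ∈ A := by simpa only [mem_erase] using hx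
    obtain ⟨_ | i, hj, rfl⟩ := exists_nthSmallest_eq hxA
    · have := hlow 0 (by omega); omega
    · exact ⟨i, by grind, rfl⟩
  refine ⟨m, (A.erase 1).erase m, hm, hlast, fun x hx => ?_, fun x hx => ?_, ?_, ?_⟩
  · obtain ⟨i, hi, rfl⟩ := hS x hx
    have := hlow (i + 1) (by omega)
    have := hmid i hi
    rw [mem_Icc]; omega
  · obtain ⟨i, hi, rfl⟩ := hS x hx
    exact nthSmallest_lt_nthSmallest (by omega) (by omega)
  · rw [card_erase_of_mem hmA, card_erase_of_mem h1, hA]; omega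
  · rw [insert_erase hmA, insert_erase h1]

theorem IsLGRCSimplex.subset_card_simplexLE_T {d n : ℕ} (hd : 1 ≤ d) (hn : d + 2 ≤ n)
    {A : Finset ℕ} (hA : IsLGRCSimplex d n A) :
    (A ⊆ Icc 1 n ∧ #A = d + 1) ∧ simplexLE d A ((Icc 1 (d + 1) \ {2}) ∪ {n}) := by
  obtain ⟨m, S, hm, hmn, hS, hSm, hcard, rfl⟩ := hA
  have hS' : ∀ x ∈ S, 1 < x ∧ x < m := fun x hx =>
    ⟨by have := mem_Icc.1 (hS hx); omega, hSm x hx⟩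
  have hmS : m ∉ S := fun h => (hSm m h).false
  have h1mS : 1 ∉ insert m S := by
    rw [mem_insert]
    rintro (h | h)
    · omega
    · exact (hS' 1 h).1.false
  refine ⟨⟨fun x hx => ?_, ?_⟩, (simplexLE_T_iff hd hn).2 ⟨?_, fun i hi => ?_, ?_⟩⟩
  · rw [mem_insert, mem_insert] at hx
    rw [mem_Icc]
    rcases hx with rfl | rfl | hx
    · omega
    · omega
    · have := hS' x hx; omega
  · rw [card_insert_of_notMem h1mS, card_insert_of_notMem hmS]; omega
  · rw [nthSmallest_insert_insert_zero (by omega) hS']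
  · rw [nthSmallest_insert_insert_succ (by omega) hS' (hcard ▸ hi)]
    have := (nthSmallest_bounds_of_subset_Icc hS (hcard ▸ hi)).2
    omega
  · convert hmn
    convert nthSmallest_insert_insert_card_succ (by omega) hS' using 2
    omega

theorem insert_one_insert_sdiff_Icc {d j : ℕ} {S : Finset ℕ} (hS : S ⊆ Icc 2 (d + 1))
    (hj : d + 2 ≤ j) : insert 1 (insert j S) \ Icc 1 (d + 1) = {j} := by
  ext x
  have := @hS x
  simp only [mem_sdiff, mem_insert, mem_Icc, mem_singleton] at this ⊢
  grind

theorem insert_one_insert_inter_Icc {d j : ℕ} {S : Finset ℕ} (hS : S ⊆ Icc 2 (d + 1))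
    (hj : d + 2 ≤ j) : insert 1 (insert j S) ∩ Icc 2 (d + 1) = S := by
  ext x
  have := @hS x
  simp only [mem_inter, mem_insert, mem_Icc] at this ⊢
  grind

theorem card_LGRC {d : ℕ} (hd : 1 ≤ d) (n : ℕ) : #(LGRC d n) = d * (n - d - 1) + 1 := by
  have hrecover : ∀ p ∈ Icc (d + 2) n ×ˢ (Icc 2 (d + 1)).powersetCard (d - 1),
      insert 1 (insert p.1 p.2) \ Icc 1 (d + 1) = {p.1} ∧
        insert 1 (insert p.1 p.2) ∩ Icc 2 (d + 1) = p.2 := by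
    intro p hp
    rw [mem_product, mem_Icc, mem_powersetCard] at hp
    exact ⟨insert_one_insert_sdiff_Icc hp.2.1 hp.1.1, insert_one_insert_inter_Icc hp.2.1 hp.1.1⟩
  have hnotMem : Icc 1 (d + 1) ∉ (Icc (d + 2) n ×ˢ (Icc 2 (d + 1)).powersetCard (d - 1)).image
      fun p => insert 1 (insert p.1 p.2) := by
    rw [mem_image]
    rintro ⟨p, hp, heq⟩
    have := (hrecover p hp).1
    rw [heq, sdiff_self] at this
    exact singleton_ne_empty _ this.symm
  have hinj : Set.InjOn (fun p : ℕ × Finset ℕ => insert 1 (insert p.1 p.2))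
      ↑(Icc (d + 2) n ×ˢ (Icc 2 (d + 1)).powersetCard (d - 1)) := by
    intro p hp q hq h
    obtain ⟨hp1, hp2⟩ := hrecover p hp
    obtain ⟨hq1, hq2⟩ := hrecover q hq
    dsimp only at h
    rw [h, hq1, singleton_inj] at hp1
    rw [h, hq2] at hp2
    exact Prod.ext hp1.symm hp2.symm
  rw [LGRC, card_insert_of_notMem hnotMem, card_image_of_injOn hinj, card_product,
    card_powersetCard, Nat.card_Icc, Nat.card_Icc,
    Nat.choose_symm_of_eq_add (show d + 1 + 1 - 2 = (d - 1) + 1 by omega), Nat.choose_one_right,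
    mul_comm, show d + 1 + 1 - 2 = d by omega, show n + 1 - (d + 2) = n - d - 1 by omega]

theorem mul_sub_sub_one_add_one {d n : ℕ} (hd : 1 ≤ d) (hn : d + 1 ≤ n) :
    d * (n - d - 1) + 1 = d * n - (d ^ 2 + d - 1) := by
  obtain ⟨k, rfl⟩ : ∃ k, n = k + d + 1 := ⟨n - d - 1, by omega⟩
  have hexpand : d * (k + d + 1) = d * k + d ^ 2 + d := by ring
  have hsq : 1 ≤ d ^ 2 := Nat.one_le_pow _ _ hd
  rw [hexpand, show k + d + 1 - d - 1 = k by omega]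
  omega

/-- The `(d+1)`-subsets of `{1, …, n}` below `T = ({1,…,d+1} \ {2}) ∪ {n}` in the
componentwise partial order are exactly the `d`-simplices of the LGRC, and there are
`d(n-d-1) + 1 = dn - (d² + d - 1)` of them. -/
theorem lgrc_is_lower_set_of_T (d n : ℕ) (hd : 1 ≤ d) (hn : d + 2 ≤ n) :
    (((Finset.Icc 1 n).powersetCard (d + 1)).filter
        fun A => simplexLE d A ((Finset.Icc 1 (d + 1) \ {2}) ∪ {n})) = LGRC d n ∧
      (LGRC d n).card = d * (n - d - 1) + 1 ∧
      d * (n - d - 1) + 1 = d * n - (d ^ 2 + d - 1) := by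
  refine ⟨?_, card_LGRC hd n, mul_sub_sub_one_add_one hd (by omega)⟩
  ext A
  rw [mem_filter, mem_powersetCard, mem_LGRC_iff (by omega)]
  exact ⟨fun ⟨⟨hAn, hA⟩, hle⟩ => .of_simplexLE_T hd hn hAn hA hle,
    fun hA => hA.subset_card_simplexLE_T hd hn⟩
end

section
/- Let d ≥ 1 and n ≥ d+1, and let Λ_d be the set of d-simplices of the LGRC on {1,…,n}. For every k with 0 ≤ k ≤ d, the number of (k+1)-element subsets of {1,…,n} that are contained in some member of Λ_d equals C(d+1, k+1) + Σ_{l=0}^{d−1} (n−d−1)·C(d−l, k−l), where C(a,b) denotes the binomial coefficient with the convention C(a,b) = 0 whenever b < 0. (This shows the face-number lower bound for bases of the d-volume rigidity matroid is sharp.) -/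
open Finset

theorem Nat.sum_range_ite_choose_sub_sub {d k : ℕ} (hk : k ≤ d) :
    (∑ l ∈ range d, if l ≤ k then (d - l).choose (k - l) else 0) + (if k = d then 1 else 0)
      = (d + 1).choose k := by
  induction d generalizing k with
  | zero => simp [Nat.le_zero.mp hk]
  | succ d ih =>
    rw [sum_range_succ']
    cases k with
    | zero => simp
    | succ k =>
      have := ih (Nat.le_of_succ_le_succ hk)
      simp only [Nat.add_le_add_iff_right, Nat.add_sub_add_right, Nat.add_right_cancel_iff,
        Nat.zero_le, if_true, Nat.sub_zero, Nat.choose_succ_succ' (d + 1) k]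
      omega

section

variable {α : Type*} [DecidableEq α]

theorem Finset.exists_mem_powersetCard_pred_subset_union_iff {A U τ : Finset α}
    (hU : U.Nonempty) (hAU : Disjoint A U) :
    (∃ S ∈ U.powersetCard (#U - 1), τ ⊆ A ∪ S) ↔ τ ⊆ A ∪ U ∧ ¬ U ⊆ τ := by
  constructor
  · rintro ⟨S, hS, hτS⟩
    rw [mem_powersetCard] at hS
    refine ⟨hτS.trans (union_subset_union_right hS.1), fun hUτ => ?_⟩
    have hUS : U ⊆ S := Disjoint.left_le_of_le_sup_left (hUτ.trans hτS) hAU.symm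
    have := card_le_card hUS
    have := hU.card_pos
    omega
  · rintro ⟨hτ, hUτ⟩
    obtain ⟨x, hxU, hxτ⟩ := not_subset.mp hUτ
    refine ⟨U.erase x, mem_powersetCard.mpr ⟨erase_subset x U, card_erase_of_mem hxU⟩,
      fun y hy => ?_⟩
    have hyx : y ≠ x := fun h => hxτ (h ▸ hy)
    have := hτ hy
    simp only [mem_union, mem_erase] at this ⊢
    tauto

theorem Finset.exists_mem_erase_powersetCard_insert_eq_iff {Δ U τ : Finset α} {j : α} {k : ℕ}
    (hjΔ : j ∉ Δ) (hjU : j ∉ U) (hk : k ≤ #U) :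
    (∃ ρ ∈ (Δ.powersetCard k).erase U, insert j ρ = τ)
      ↔ j ∈ τ ∧ τ ⊆ insert j Δ ∧ #τ = k + 1 ∧ ¬ U ⊆ τ := by
  constructor
  · rintro ⟨ρ, hρ, rfl⟩
    rw [mem_erase, mem_powersetCard] at hρ
    obtain ⟨hρU, hρΔ, hρk⟩ := hρ
    refine ⟨mem_insert_self j ρ, insert_subset_insert j hρΔ,
      by rw [card_insert_of_notMem fun h => hjΔ (hρΔ h), hρk], fun hU => hρU ?_⟩
    exact (eq_of_subset_of_card_le ((subset_insert_iff_of_notMem hjU).mp hU) (hρk ▸ hk)).symm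
  · rintro ⟨hjτ, hτΔ, hτk, hUτ⟩
    refine ⟨τ.erase j, ?_, insert_erase hjτ⟩
    rw [mem_erase, mem_powersetCard, card_erase_of_mem hjτ, hτk]
    refine ⟨fun h => hUτ (h ▸ erase_subset j τ), ?_, rfl⟩
    simpa [erase_insert hjΔ] using erase_subset_erase j hτΔ

theorem Finset.card_image_insert_product {J : Finset α} {𝒬 : Finset (Finset α)}
    (h : ∀ j ∈ J, ∀ ρ ∈ 𝒬, j ∉ ρ) :
    #((J ×ˢ 𝒬).image fun p => insert p.1 p.2) = #J * #𝒬 := by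
  rw [card_image_of_injOn, card_product]
  rintro ⟨j, ρ⟩ hjρ ⟨j', ρ'⟩ hjρ' heq
  simp only [coe_product, Set.mem_prod, mem_coe] at hjρ hjρ' heq
  have hjj' : j = j' := by
    have : j ∈ insert j' ρ' := heq ▸ mem_insert_self j ρ
    exact (mem_insert.mp this).resolve_right (h j hjρ.1 ρ' hjρ'.2)
  subst hjj'
  have := congrArg (erase · j) heq
  simp only [erase_insert (h j hjρ.1 ρ hjρ.2), erase_insert (h j hjρ'.1 ρ' hjρ'.2)] at this
  rw [this]

end

section LGRC

variable {d n k : ℕ}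

theorem exists_superset_mem_LGRC_iff (hd : 1 ≤ d) {τ : Finset ℕ} :
    (∃ σ ∈ LGRC d n, τ ⊆ σ) ↔ τ ⊆ Icc 1 (d + 1)
      ∨ ∃ j ∈ Icc (d + 2) n, τ ⊆ insert j (Icc 1 (d + 1)) ∧ ¬ Icc 2 (d + 1) ⊆ τ := by
  have hΔ : Icc 1 (d + 1) = insert 1 (Icc 2 (d + 1)) := by ext; simp; omega
  have hU : #(Icc 2 (d + 1)) = d := by simp
  have cell : ∀ j ∈ Icc (d + 2) n,
      (∃ S ∈ (Icc 2 (d + 1)).powersetCard (d - 1), τ ⊆ insert 1 (insert j S))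
        ↔ τ ⊆ insert j (Icc 1 (d + 1)) ∧ ¬ Icc 2 (d + 1) ⊆ τ := by
    intro j hj
    have hdisj : Disjoint {1, j} (Icc 2 (d + 1)) := by
      simp only [disjoint_insert_left, disjoint_singleton_left, mem_Icc]
      simp only [mem_Icc] at hj
      omega
    have hcell := exists_mem_powersetCard_pred_subset_union_iff (τ := τ)
      (nonempty_Icc.mpr (by omega)) hdisj
    simpa only [hU, hΔ, insert_union, ← insert_eq, insert_comm j 1] using hcell
  simp only [LGRC, exists_mem_insert, exists_mem_image, mem_product, Prod.exists, and_assoc,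
    exists_and_left]
  exact or_congr Iff.rfl (exists_congr fun j => and_congr_right (cell j))

theorem faces_LGRC_eq (hd : 1 ≤ d) (hn : d + 1 ≤ n) (hk : k ≤ d) :
    ((Icc 1 n).powersetCard (k + 1)).filter (fun τ => ∃ σ ∈ LGRC d n, τ ⊆ σ)
      = (Icc 1 (d + 1)).powersetCard (k + 1)
        ∪ (Icc (d + 2) n ×ˢ ((Icc 1 (d + 1)).powersetCard k).erase (Icc 2 (d + 1))).image
            fun p => insert p.1 p.2 := by
  have hΔn : Icc 1 (d + 1) ⊆ Icc 1 n := Icc_subset_Icc le_rfl hn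
  ext τ
  have cone : ∀ j ∈ Icc (d + 2) n,
      (∃ ρ ∈ ((Icc 1 (d + 1)).powersetCard k).erase (Icc 2 (d + 1)), insert j ρ = τ)
        ↔ j ∈ τ ∧ τ ⊆ insert j (Icc 1 (d + 1)) ∧ #τ = k + 1 ∧ ¬ Icc 2 (d + 1) ⊆ τ := by
    intro j hj
    rw [mem_Icc] at hj
    exact exists_mem_erase_powersetCard_insert_eq_iff (by simp; omega) (by simp; omega)
      (by simpa using hk)
  simp only [mem_filter, mem_union, mem_powersetCard, mem_image, mem_product, Prod.exists,
    exists_superset_mem_LGRC_iff hd, and_assoc, exists_and_left]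
  constructor
  · rintro ⟨hτn, hτk, hτΔ | ⟨j, hj, hτj, hUτ⟩⟩
    · exact Or.inl ⟨hτΔ, hτk⟩
    · by_cases hjτ : j ∈ τ
      · exact Or.inr ⟨j, hj, (cone j hj).mpr ⟨hjτ, hτj, hτk, hUτ⟩⟩
      · exact Or.inl ⟨(subset_insert_iff_of_notMem hjτ).mp hτj, hτk⟩
  · rintro (⟨hτΔ, hτk⟩ | ⟨j, hj, hjτ⟩)
    · exact ⟨hτΔ.trans hΔn, hτk, Or.inl hτΔ⟩
    · obtain ⟨-, hτj, hτk, hUτ⟩ := (cone j hj).mp hjτ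
      have hjn : j ∈ Icc 1 n := by simp only [mem_Icc] at hj ⊢; omega
      exact ⟨hτj.trans (insert_subset hjn hΔn), hτk, Or.inr ⟨j, hj, hτj, hUτ⟩⟩

theorem card_erase_Icc_two_powersetCard_Icc_one (hk : k ≤ d) :
    #(((Icc 1 (d + 1)).powersetCard k).erase (Icc 2 (d + 1)))
      = ∑ l ∈ range d, if l ≤ k then (d - l).choose (k - l) else 0 := by
  have hsum := Nat.sum_range_ite_choose_sub_sub hk
  have hU : Icc 2 (d + 1) ∈ (Icc 1 (d + 1)).powersetCard k ↔ k = d := by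
    rw [mem_powersetCard, Nat.card_Icc]
    exact ⟨fun h => by omega, fun h => ⟨Icc_subset_Icc (by omega) le_rfl, by omega⟩⟩
  rw [card_erase_eq_ite, card_powersetCard, Nat.card_Icc, Nat.add_sub_cancel, ← hsum]
  simp only [hU]
  by_cases h : k = d <;> simp [h]

end LGRC

/-- The number of `k`-faces of the LGRC attains the face-number lower bound for bases of
the `d`-volume rigidity matroid: for `0 ≤ k ≤ d`, the number of `(k+1)`-element subsets of
`{1, …, n}` contained in some `d`-simplex of the LGRC is exactly
`C(d+1, k+1) + ∑_{l=0}^{d-1} (n-d-1)·C(d-l, k-l)` (terms with `l > k` being zero). -/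
theorem lgrc_face_numbers (d n : ℕ) (hd : 1 ≤ d) (hn : d + 1 ≤ n) :
    ∀ k ≤ d,
      (((Finset.Icc 1 n).powersetCard (k + 1)).filter
          fun τ => ∃ σ ∈ LGRC d n, τ ⊆ σ).card
        = (d + 1).choose (k + 1)
            + ∑ l ∈ Finset.range d,
                (if l ≤ k then (n - d - 1) * (d - l).choose (k - l) else 0) := by
  intro k hk
  have hapex : ∀ j ∈ Icc (d + 2) n, j ∉ Icc 1 (d + 1) := by
    intro j hj
    simp only [mem_Icc] at hj ⊢
    omega
  have hdisj : Disjoint ((Icc 1 (d + 1)).powersetCard (k + 1))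
      ((Icc (d + 2) n ×ˢ ((Icc 1 (d + 1)).powersetCard k).erase (Icc 2 (d + 1))).image
        fun p => insert p.1 p.2) := by
    simp only [disjoint_right, mem_image, mem_product, Prod.exists, mem_powersetCard]
    rintro _ ⟨j, ρ, ⟨hj, -⟩, rfl⟩ ⟨hsub, -⟩
    exact hapex j hj (hsub (mem_insert_self j ρ))
  have hcone : ∀ j ∈ Icc (d + 2) n,
      ∀ ρ ∈ ((Icc 1 (d + 1)).powersetCard k).erase (Icc 2 (d + 1)), j ∉ ρ := by
    intro j hj ρ hρ hjρ
    exact hapex j hj ((mem_powersetCard.mp (mem_of_mem_erase hρ)).1 hjρ)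
  rw [faces_LGRC_eq hd hn hk, card_union_of_disjoint hdisj, card_image_insert_product hcone,
    card_powersetCard, Nat.card_Icc, Nat.add_sub_cancel, Nat.card_Icc,
    card_erase_Icc_two_powersetCard_Icc_one hk, mul_sum, show n + 1 - (d + 2) = n - d - 1 by omega]
  simp only [mul_ite, mul_zero]
end

section
/- Let d ≥ 1 and n ≥ d+1, and let Λ_d be the set of d-simplices of the LGRC on {1,…,n}. For all generic configurations p, q : Fin n → (Fin d → ℝ): if vol_σ(p) = vol_σ(q) for every σ ∈ Λ_d, then vol_τ(p) = vol_τ(q) for every (d+1)-element subset τ of {1,…,n}. In other words, the d-dimensional LGRC on n vertices is generically globally d-volume rigid in ℝ^d. -/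
/-- The signed `d`-volume of the `(d+1)`-element simplex `σ ⊆ ℕ` at the configuration
`p : ℕ → Fin d → ℝ`: the determinant of the `(d+1) × (d+1)` matrix whose `j`-th column has
first entry `1` followed by the `d` coordinates of the `j`-th point of `σ` (in increasing
order).  Junk value `0` if `σ` does not have `d+1` elements. -/
noncomputable def vol (d : ℕ) (σ : Finset ℕ) (p : ℕ → Fin d → ℝ) : ℝ :=
  if h : σ.card = d + 1 then
    Matrix.det
      ((Matrix.of (Fin.cons (fun _ => (1 : ℝ)) fun i j => p (σ.orderEmbOfFin h j) i) :
        Matrix (Fin (d + 1)) (Fin (d + 1)) ℝ))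
  else 0

/-- A configuration of the `n` vertices `{1, …, n}` in `ℝ^d` is generic if every nonzero
polynomial with rational coefficients in the `d·n` coordinate variables is nonzero at the
coordinates of the configuration. -/
def IsGeneric (d n : ℕ) (p : ℕ → Fin d → ℝ) : Prop :=
  ∀ f : MvPolynomial (↥(Finset.Icc 1 n) × Fin d) ℚ, f ≠ 0 →
    (MvPolynomial.aeval fun v : ↥(Finset.Icc 1 n) × Fin d => p v.1.1 v.2) f ≠ 0

/-! Let `P` and `Q` be the matrices of the first simplex `{1, …, d + 1}` in homogeneous
coordinates. Genericity gives `det P ≠ 0`, and the first simplex lies in the LGRC, so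
`det P = det Q`. For a later vertex `t` and `i ≠ 0`, replacing vertex `i + 1` of the first simplex
by `t` gives an LGRC simplex, so the Cramer coordinates of `t` with respect to `P` and `Q` agree
except possibly at `0`; they agree there too, since both sum to `det P = det Q` (the first rows of
`P` and `Q` are all ones). Thus `P⁻¹ p̂_t = Q⁻¹ q̂_t` for every vertex `t`, and every simplex has
the same volume under `p` and `q`. -/

open Finset Matrix Function

namespace Matrix

variable {n α K : Type*} [Fintype n] [DecidableEq n]

theorem sum_cramer_of_row_eq_one [CommRing α] {A : Matrix n n α} {r : n}
    (hr : ∀ j, A r j = 1) (b : n → α) : ∑ i, cramer A b i = A.det * b r := by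
  simpa [mulVec, dotProduct, hr] using congrFun (mulVec_cramer A b) r

theorem cramer_eq_cramer_of_forall_ne [CommRing α] {A B : Matrix n n α} {r : n}
    (hA : ∀ j, A r j = 1) (hB : ∀ j, B r j = 1) (hdet : A.det = B.det) {a b : n → α}
    (hab : a r = b r) (h : ∀ i ≠ r, cramer A a i = cramer B b i) : cramer A a = cramer B b := by
  funext i
  by_cases hi : i = r
  · subst hi
    have hsum := sum_cramer_of_row_eq_one hA a
    rw [hdet, hab, ← sum_cramer_of_row_eq_one hB b, ← add_sum_erase _ _ (mem_univ i),
      ← add_sum_erase _ _ (mem_univ i), sum_congr rfl fun j hj => h j (ne_of_mem_erase hj)] at hsum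
    exact add_right_cancel hsum
  · exact h i hi

/-- Since `cramer A w = det A • A⁻¹ *ᵥ w`, the Cramer coordinates of the rows of `of u`
determine `of u` as a product with `Aᵀ`. -/
theorem det_of_eq_det_of_cramer_eq [Field K] {A B : Matrix n n K} (hdet : A.det = B.det)
    (hA : A.det ≠ 0) {u v : n → n → K} (h : ∀ j, cramer A (u j) = cramer B (v j)) :
    (of u).det = (of v).det := by
  have hrows : ∀ (C : Matrix n n K) (w : n → n → K), C.det ≠ 0 →
      of w = of (fun j => C.det⁻¹ • cramer C (w j)) * Cᵀ := by
    intro C w hC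
    ext j i
    rw [mul_apply_eq_vecMul, vecMul_transpose]
    change w j i = (C *ᵥ (C.det⁻¹ • C.cramer (w j))) i
    rw [mulVec_smul, mulVec_cramer, smul_smul, inv_mul_cancel₀ hC, one_smul]
  rw [hrows A u hA, hrows B v (hdet ▸ hA), det_mul, det_mul, det_transpose, det_transpose, hdet]
  simp only [h]

end Matrix

section LiftedConfiguration

variable {R : Type*} {d : ℕ}

def liftPoint [One R] (p : ℕ → Fin d → R) (t : ℕ) : Fin (d + 1) → R :=
  Fin.cons 1 (p t)

def liftMatrix [One R] (p : ℕ → Fin d → R) (e : Fin (d + 1) → ℕ) :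
    Matrix (Fin (d + 1)) (Fin (d + 1)) R :=
  (of fun j => liftPoint p (e j))ᵀ

@[simp]
theorem liftMatrix_zero_apply [One R] (p : ℕ → Fin d → R) (e : Fin (d + 1) → ℕ)
    (j : Fin (d + 1)) : liftMatrix p e 0 j = 1 :=
  rfl

theorem liftMatrix_updateCol [One R] (p : ℕ → Fin d → R) (e : Fin (d + 1) → ℕ) (i : Fin (d + 1))
    (t : ℕ) : (liftMatrix p e).updateCol i (liftPoint p t) = liftMatrix p (update e i t) := by
  ext a j
  rcases eq_or_ne j i with rfl | hj
  · simp [liftMatrix]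
  · simp [liftMatrix, hj]

theorem cramer_liftMatrix_liftPoint [CommRing R] (p : ℕ → Fin d → R) (e : Fin (d + 1) → ℕ)
    (j : Fin (d + 1)) :
    cramer (liftMatrix p e) (liftPoint p (e j)) = Pi.single j (liftMatrix p e).det :=
  cramer_row_self _ _ j fun _ => rfl

end LiftedConfiguration

theorem vol_eq_det_liftMatrix {d : ℕ} {σ : Finset ℕ} (h : σ.card = d + 1) (p : ℕ → Fin d → ℝ) :
    vol d σ p = (liftMatrix p (σ.orderEmbOfFin h)).det := by
  rw [vol, dif_pos h]
  congr 1
  ext i j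
  cases i using Fin.cases <;> rfl

theorem exists_sign_det_liftMatrix_eq_vol {d : ℕ} {e : Fin (d + 1) → ℕ} (he : Injective e) :
    ∃ s : ℤˣ, ∀ p : ℕ → Fin d → ℝ, (liftMatrix p e).det = s * vol d (univ.image e) p := by
  have hcard : (univ.image e).card = d + 1 := by
    rw [card_image_of_injective _ he, card_univ, Fintype.card_fin]
  set g := (univ.image e).orderIsoOfFin hcard
  let π₀ : Fin (d + 1) → Fin (d + 1) := fun j => g.symm ⟨e j, mem_image_of_mem e (mem_univ j)⟩
  have hπ₀ : Injective π₀ := fun a b hab => he (by simpa [π₀] using hab)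
  let π := Equiv.ofBijective π₀ (Finite.injective_iff_bijective.mp hπ₀)
  refine ⟨Equiv.Perm.sign π, fun p => ?_⟩
  have hperm : liftMatrix p e =
      (liftMatrix p ((univ.image e).orderEmbOfFin hcard)).submatrix id π := by
    ext i j
    simp [liftMatrix, π, π₀, g, ← coe_orderIsoOfFin_apply]
  rw [vol_eq_det_liftMatrix hcard, hperm, det_permute']

def firstVertices (d : ℕ) : Fin (d + 1) → ℕ := fun j => j + 1

theorem image_firstVertices (d : ℕ) : univ.image (firstVertices d) = Icc 1 (d + 1) := by
  ext x
  simp only [mem_image, mem_univ, true_and, mem_Icc, firstVertices]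
  constructor
  · rintro ⟨j, rfl⟩
    omega
  · intro hx
    exact ⟨⟨x - 1, by omega⟩, by simp only; omega⟩

theorem injective_update_firstVertices {d t : ℕ} (ht : d + 1 < t) (i : Fin (d + 1)) :
    Injective (update (firstVertices d) i t) := by
  intro a b hab
  simp only [update_apply, firstVertices] at hab
  split_ifs at hab with ha hb hb <;> first | exact ha.trans hb.symm | omega

theorem image_update_firstVertices_mem_LGRC {d n t : ℕ} (ht : t ∈ Icc (d + 2) n)
    {i : Fin (d + 1)} (hi : i ≠ 0) : univ.image (update (firstVertices d) i t) ∈ LGRC d n := by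
  have hi' : (i : ℕ) ≠ 0 := Fin.val_ne_zero_iff.mpr hi
  have hS : ((Icc 2 (d + 1)).erase (i + 1)).card = d - 1 := by
    rw [card_erase_of_mem (by simp; omega), Nat.card_Icc]
    omega
  refine mem_insert_of_mem (mem_image.mpr ⟨(t, (Icc 2 (d + 1)).erase (i + 1)), ?_, ?_⟩)
  · exact mem_product.mpr ⟨ht, mem_powersetCard.mpr ⟨erase_subset _ _, hS⟩⟩
  · rw [mem_Icc] at ht
    ext x
    simp only [mem_image, mem_univ, true_and, mem_insert, mem_erase, mem_Icc, update_apply,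
      firstVertices]
    constructor
    · rintro (rfl | rfl | ⟨hx, hx2, hxd⟩)
      · exact ⟨0, by simp [hi.symm]⟩
      · exact ⟨i, by simp⟩
      · refine ⟨⟨x - 1, by omega⟩, ?_⟩
        rw [if_neg fun h => hx (by rw [← h, Fin.val_mk]; omega)]
        simp only
        omega
    · rintro ⟨j, rfl⟩
      split_ifs with hj
      · exact Or.inr (Or.inl rfl)
      · have : (j : ℕ) ≠ i := fun h => hj (Fin.ext h)
        omega

theorem IsGeneric.det_liftMatrix_firstVertices_ne_zero {d n : ℕ} {p : ℕ → Fin d → ℝ}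
    (hp : IsGeneric d n p) (hn : d + 1 ≤ n) : (liftMatrix p (firstVertices d)).det ≠ 0 := by
  have hlt : ∀ j : Fin (d + 1), (j : ℕ) < n := fun j => by omega
  set X : ℕ → Fin d → MvPolynomial (Icc 1 n × Fin d) ℚ := fun t i =>
    if h : t ∈ Icc 1 n then .X (⟨t, h⟩, i) else 0
  have hX : (liftMatrix X (firstVertices d)).det ≠ 0 := by
    intro h0
    -- on the moment curve `t ↦ (t, t², …, t^d)` the determinant is a Vandermonde determinant
    let x₀ : Icc 1 n × Fin d → ℚ := fun v => (v.1 : ℚ) ^ (v.2 + 1 : ℕ)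
    have hV : (MvPolynomial.eval x₀).mapMatrix (liftMatrix X (firstVertices d)) =
        (vandermonde fun j : Fin (d + 1) => (j : ℚ) + 1)ᵀ := by
      ext i j
      cases i using Fin.cases <;> simp [liftMatrix, liftPoint, X, x₀, firstVertices, hlt j]
    have := congrArg (MvPolynomial.eval x₀) h0
    rw [RingHom.map_det, hV, det_transpose, map_zero] at this
    exact det_vandermonde_ne_zero_iff.mpr (fun a b h => Fin.ext (by simpa using h)) this
  convert hp _ hX using 1
  rw [AlgHom.map_det]
  congr 1
  ext i j
  cases i using Fin.cases <;> simp [liftMatrix, liftPoint, X, firstVertices, hlt j]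

theorem cramer_liftPoint_eq {d n : ℕ} {p q : ℕ → Fin d → ℝ}
    (hdet : (liftMatrix p (firstVertices d)).det = (liftMatrix q (firstVertices d)).det)
    (heq : ∀ σ ∈ LGRC d n, vol d σ p = vol d σ q) {t : ℕ} (ht : t ∈ Icc 1 n) :
    cramer (liftMatrix p (firstVertices d)) (liftPoint p t) =
      cramer (liftMatrix q (firstVertices d)) (liftPoint q t) := by
  rw [mem_Icc] at ht
  rcases le_or_gt t (d + 1) with hle | hgt
  · obtain ⟨j, rfl⟩ : ∃ j : Fin (d + 1), firstVertices d j = t := ⟨⟨t - 1, by omega⟩, by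
      simp only [firstVertices]; omega⟩
    rw [cramer_liftMatrix_liftPoint, cramer_liftMatrix_liftPoint, hdet]
  · refine cramer_eq_cramer_of_forall_ne (liftMatrix_zero_apply _ _) (liftMatrix_zero_apply _ _)
      hdet rfl fun i hi => ?_
    obtain ⟨s, hs⟩ := exists_sign_det_liftMatrix_eq_vol (injective_update_firstVertices hgt i)
    rw [cramer_apply, cramer_apply, liftMatrix_updateCol, liftMatrix_updateCol, hs, hs,
      heq _ (image_update_firstVertices_mem_LGRC (mem_Icc.mpr ⟨hgt, ht.2⟩) hi)]

theorem lgrc_generically_globally_rigid_general (d n : ℕ) (hn : d + 1 ≤ n)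
    (p q : ℕ → Fin d → ℝ) (hp : IsGeneric d n p)
    (heq : ∀ σ ∈ LGRC d n, vol d σ p = vol d σ q) :
    ∀ τ ⊆ Finset.Icc 1 n, τ.card = d + 1 → vol d τ p = vol d τ q := by
  have hdet : (liftMatrix p (firstVertices d)).det = (liftMatrix q (firstVertices d)).det := by
    obtain ⟨s, hs⟩ := exists_sign_det_liftMatrix_eq_vol (d := d) (e := firstVertices d)
      fun a b h => Fin.ext (by simpa [firstVertices] using h)
    rw [hs, hs, image_firstVertices, heq _ (mem_insert_self _ _)]
  intro τ hτ hcard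
  rw [vol_eq_det_liftMatrix hcard, vol_eq_det_liftMatrix hcard, liftMatrix, liftMatrix,
    det_transpose, det_transpose]
  exact det_of_eq_det_of_cramer_eq hdet (hp.det_liftMatrix_firstVertices_ne_zero hn) fun j =>
    cramer_liftPoint_eq hdet heq (hτ (τ.orderEmbOfFin_mem hcard j))

/-- The `d`-dimensional LGRC on `n` vertices is generically globally `d`-volume rigid
in `ℝ^d`. -/
theorem lgrc_generically_globally_rigid (d n : ℕ) (hd : 1 ≤ d) (hn : d + 1 ≤ n)
    (p q : ℕ → Fin d → ℝ) (hp : IsGeneric d n p) (hq : IsGeneric d n q)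
    (heq : ∀ σ ∈ LGRC d n, vol d σ p = vol d σ q) :
    ∀ τ ⊆ Finset.Icc 1 n, τ.card = d + 1 → vol d τ p = vol d τ q :=
  lgrc_generically_globally_rigid_general d n hn p q hp heq
end
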